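/- arXiv:2511.05956 — 5 statements merged into one kernel-verified Lean document; each statement's English description precedes it below -/
import Mathlib

section
/- Let N ≥ 2, h > 0, r₊ > 0, κ > 0, μ > 0, and set α = (κ/(4π))(1/h² − (N−1)/r₊²) − μ/(2π r₊²). Define Z₀(τ) = 0 with circulation κ₀ = μ and Z_j(τ) = r₊ e^{−iατ} e^{2πi(j−1)/N} with circulations κ_j = κ for j = 1,…,N. Then for each j = 0,1,…,N, ∂_τ Z_j = (1/(4π))( −(iκ_j/h²) Z_j + 2i ∑_{k≠j} κ_k (Z_j − Z_k)/|Z_j − Z_k|² ). -/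
open Finset Complex

lemma pair_sum (N : ℕ) (hN : 2 ≤ N) (ζ : ℂ) (hζ : IsPrimitiveRoot ζ N) :
    ∑ m ∈ Finset.Icc 1 (N - 1), ζ ^ m / (ζ ^ m - 1) = ((N : ℂ) - 1) / 2 := by
  have hζ0 : ζ ≠ 0 := hζ.ne_zero (by omega)
  have hζN : ζ ^ N = 1 := hζ.pow_eq_one
  have hne1 : ∀ m ∈ Finset.Icc 1 (N - 1), ζ ^ m ≠ 1 := by
    intro m hm
    simp only [Finset.mem_Icc] at hm
    exact hζ.pow_ne_one_of_pos_of_lt (by omega) (by omega)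
  set S := ∑ m ∈ Finset.Icc 1 (N - 1), ζ ^ m / (ζ ^ m - 1) with hS
  have hrefl : S = ∑ m ∈ Finset.Icc 1 (N - 1), ζ ^ (N - m) / (ζ ^ (N - m) - 1) := by
    rw [hS]
    refine Finset.sum_nbij' (fun m => N - m) (fun m => N - m) ?_ ?_ ?_ ?_ ?_ <;>
      intro a ha <;> simp only [Finset.mem_Icc] at ha ⊢ <;> try omega
    rw [Nat.sub_sub_self (by omega : a ≤ N)]
  have key : S + S = (N : ℂ) - 1 := by
    nth_rewrite 1 [hrefl]
    rw [hS]
    rw [← Finset.sum_add_distrib]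
    have : ∀ m ∈ Finset.Icc 1 (N - 1),
        ζ ^ (N - m) / (ζ ^ (N - m) - 1) + ζ ^ m / (ζ ^ m - 1) = 1 := by
      intro m hm
      have h1 := hne1 m hm
      simp only [Finset.mem_Icc] at hm
      have hinv : ζ ^ (N - m) = (ζ ^ m)⁻¹ := by
        have : ζ ^ (N - m) * ζ ^ m = 1 := by
          rw [← pow_add]; rwa [Nat.sub_add_cancel (by omega)]
        field_simp at this ⊢
        linear_combination this
      rw [hinv]
      have hz0 : ζ ^ m ≠ 0 := pow_ne_zero _ hζ0
      have hz1 : (ζ ^ m)⁻¹ - 1 ≠ 0 := by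
        intro hc
        apply h1
        have : (ζ ^ m)⁻¹ = 1 := by linear_combination hc
        rw [inv_eq_one] at this; exact this
      have hz1' : ζ ^ m - 1 ≠ 0 := sub_ne_zero.mpr h1
      have h10 : (1:ℂ) - ζ ^ m ≠ 0 := by
        intro hc; exact h1 (by linear_combination -hc)
      field_simp
      ring
    rw [Finset.sum_congr rfl this]
    rw [Finset.sum_const, Nat.card_Icc]
    have h2 : N - 1 + 1 - 1 = N - 1 := by omega
    rw [h2, nsmul_eq_mul, mul_one, Nat.cast_sub (by omega : 1 ≤ N), Nat.cast_one]
  linear_combination key / 2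

set_option maxHeartbeats 1600000 in
theorem corotating_N_plus_one_helical_solution
    (N : ℕ) (hN : 2 ≤ N) (h r κ μ α : ℝ) (hh : 0 < h) (hr : 0 < r) (hκ : 0 < κ) (hμ : 0 < μ)
    (hα : α = κ / (4 * Real.pi) * (1 / h ^ 2 - ((N : ℝ) - 1) / r ^ 2) - μ / (2 * Real.pi * r ^ 2))
    (κf : ℕ → ℝ) (hκ0 : κf 0 = μ) (hκj : ∀ j ∈ Finset.Icc 1 N, κf j = κ)
    (Z : ℕ → ℝ → ℂ) (hZ0 : Z 0 = fun _ => 0)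
    (hZ : ∀ j ∈ Finset.Icc 1 N, Z j = fun τ : ℝ => (r : ℂ) *
      Complex.exp (-Complex.I * (α : ℂ) * (τ : ℂ)) *
      Complex.exp (2 * (Real.pi : ℂ) * Complex.I * ((j : ℂ) - 1) / (N : ℂ))) :
    ∀ j ∈ Finset.range (N + 1), ∀ τ : ℝ,
      HasDerivAt (Z j)
        ((1 / (4 * (Real.pi : ℂ))) *
          (-(Complex.I * (κf j : ℂ) / (h : ℂ) ^ 2) * Z j τ +
            2 * Complex.I * ∑ k ∈ (Finset.range (N + 1)).erase j,
              (κf k : ℂ) * (Z j τ - Z k τ) /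
                (((‖Z j τ - Z k τ‖ : ℝ) : ℂ) ^ 2))) τ := by
  have hNz : (N : ℂ) ≠ 0 := Nat.cast_ne_zero.mpr (by omega)
  have hrC : (r : ℂ) ≠ 0 := Complex.ofReal_ne_zero.mpr hr.ne'
  have hhC : (h : ℂ) ≠ 0 := Complex.ofReal_ne_zero.mpr hh.ne'
  have hπC : (Real.pi : ℂ) ≠ 0 := Complex.ofReal_ne_zero.mpr Real.pi_ne_zero
  set ζ : ℂ := Complex.exp (2 * ↑Real.pi * Complex.I / ↑N) with hζdef
  have hprim : IsPrimitiveRoot ζ N := Complex.isPrimitiveRoot_exp N (by omega)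
  have hζN : ζ ^ N = 1 := hprim.pow_eq_one
  have hζ0 : ζ ≠ 0 := hprim.ne_zero (by omega)
  have habsζ : ∀ m : ℕ, ‖ζ ^ m‖ = 1 := by
    intro m
    have h1 : ‖ζ‖ = 1 := by
      exact Complex.norm_eq_one_of_pow_eq_one hζN (by omega)
    rw [norm_pow, h1, one_pow]
  set w : ℕ → ℂ := fun j => Complex.exp (2 * (Real.pi : ℂ) * Complex.I * ((j : ℂ) - 1) / (N : ℂ))
    with hwdef
  have hwz : ∀ j : ℕ, 1 ≤ j → w j = ζ ^ (j - 1) := by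
    intro j hj
    have harg : 2 * (Real.pi : ℂ) * Complex.I * ((j : ℂ) - 1) / (N : ℂ)
        = ((j - 1 : ℕ) : ℂ) * (2 * (Real.pi : ℂ) * Complex.I / (N : ℂ)) := by
      rw [Nat.cast_sub hj]; push_cast; ring
    simp only [hwdef]
    rw [harg, Complex.exp_nat_mul, ← hζdef]
  set E : ℝ → ℂ := fun τ => Complex.exp (-Complex.I * (α : ℂ) * (τ : ℂ)) with hEdef
  have hEabs : ∀ τ : ℝ, ‖E τ‖ = 1 := by
    intro τ
    have harg : -Complex.I * (α : ℂ) * (τ : ℂ) = ((-(α * τ) : ℝ) : ℂ) * Complex.I := by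
      push_cast; ring
    simp only [hEdef]
    rw [harg, Complex.norm_exp_ofReal_mul_I]
  have hE0 : ∀ τ : ℝ, E τ ≠ 0 := fun τ => Complex.exp_ne_zero _
  have hwabs : ∀ j : ℕ, 1 ≤ j → ‖w j‖ = 1 := by
    intro j hj; rw [hwz j hj]; exact habsζ _
  have hw0 : ∀ j : ℕ, 1 ≤ j → w j ≠ 0 := by
    intro j hj
    rw [hwz j hj]; exact pow_ne_zero _ hζ0
  have hZj' : ∀ j ∈ Finset.Icc 1 N, ∀ τ : ℝ, Z j τ = (r : ℂ) * E τ * w j := by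
    intro j hj τ
    rw [hZ j hj]
  have hconj : ∀ u : ℂ, ‖u‖ = 1 → (starRingEnd ℂ) u = u⁻¹ := by
    intro u hu
    rw [← Complex.inv_eq_conj]
    exact hu
  -- square of abs as z * conj z
  have habs2 : ∀ d : ℂ, ((‖d‖ : ℝ) : ℂ) ^ 2 = d * (starRingEnd ℂ) d := by
    intro d
    calc ((‖d‖ : ℝ) : ℂ) ^ 2 = ((‖d‖ ^ 2 : ℝ) : ℂ) := by push_cast; ring
      _ = ((Complex.normSq d : ℝ) : ℂ) := by rw [Complex.sq_norm]
      _ = d * (starRingEnd ℂ) d := (Complex.mul_conj d).symm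
  -- key single-term identity
  have hterm : ∀ z : ℂ, ‖z‖ = 1 → z ≠ 1 → ∀ u : ℂ, ‖u‖ = 1 →
      (u - u * z) / ((‖u - u * z‖ : ℂ) ^ 2) = u * (z / (z - 1)) := by
    intro z hz hz1 u hu
    have hz0 : z ≠ 0 := by intro hc; rw [hc] at hz; simp at hz
    have hu0 : u ≠ 0 := by intro hc; rw [hc] at hu; simp at hu
    have hz1' : z - 1 ≠ 0 := sub_ne_zero.mpr hz1
    rw [habs2, map_sub, map_mul, hconj z hz, hconj u hu]
    have hd : u - u * z ≠ 0 := by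
      intro hc
      apply hz1
      have : u * (1 - z) = 0 := by linear_combination hc
      rcases mul_eq_zero.mp this with h' | h'
      · exact absurd h' hu0
      · linear_combination -h'
    field_simp
  -- geometric sum of all roots
  have hgeom : ∑ k ∈ Finset.Icc 1 N, w k = 0 := by
    have h1 : ∑ k ∈ Finset.Icc 1 N, w k = ∑ m ∈ Finset.range N, ζ ^ m := by
      refine Finset.sum_nbij' (fun k => k - 1) (fun m => m + 1) ?_ ?_ ?_ ?_ ?_ <;>
        intro a ha <;>
        simp only [Finset.mem_Icc, Finset.mem_range] at ha ⊢ <;> try omega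
      rw [hwz a (by omega)]
    rw [h1, geom_sum_eq (hprim.ne_one hN) N, hζN]
    simp
  intro j hj τ
  simp only [Finset.mem_range] at hj
  rcases Nat.eq_zero_or_pos j with hj0 | hj1
  · -- j = 0 case
    subst hj0
    have hder : HasDerivAt (Z 0) 0 τ := by rw [hZ0]; exact hasDerivAt_const τ 0
    convert hder using 1
    have hsplit0 : (Finset.range (N + 1)).erase 0 = Finset.Icc 1 N := by
      ext k
      simp only [Finset.mem_erase, Finset.mem_range, Finset.mem_Icc]
      omega
    rw [hsplit0, hZ0]
    simp only
    have hsum : ∑ k ∈ Finset.Icc 1 N, (κf k : ℂ) * ((0:ℂ) - Z k τ) /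
        ((‖(0:ℂ) - Z k τ‖ : ℂ) ^ 2) = (-(κ:ℂ) * E τ / r) * ∑ k ∈ Finset.Icc 1 N, w k := by
      rw [Finset.mul_sum]
      refine Finset.sum_congr rfl ?_
      intro k hk
      have hk' := Finset.mem_Icc.mp hk
      rw [hκj k hk, hZj' k hk τ]
      have habs : ‖(0:ℂ) - (r : ℂ) * E τ * w k‖ = r := by
        rw [zero_sub, norm_neg, norm_mul, norm_mul, Complex.norm_real, Real.norm_eq_abs,
          hEabs τ, hwabs k hk'.1, abs_of_pos hr]
        ring
      rw [habs]
      have : ((r : ℝ) : ℂ) ^ 2 ≠ 0 := pow_ne_zero _ hrC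
      field_simp
      ring
    rw [hsum, hgeom]
    simp
  · -- j ∈ [1, N]
    have hjN : j ≤ N := by omega
    have hjm : j ∈ Finset.Icc 1 N := Finset.mem_Icc.mpr ⟨hj1, hjN⟩
    -- derivative
    have hder : HasDerivAt (Z j)
        ((r : ℂ) * (Complex.exp (-Complex.I * (α : ℂ) * (τ : ℂ)) * (-Complex.I * (α : ℂ))) *
          Complex.exp (2 * (Real.pi : ℂ) * Complex.I * ((j : ℂ) - 1) / (N : ℂ))) τ := by
      rw [hZ j hjm]
      have h2 : HasDerivAt (fun z : ℂ => -Complex.I * (α : ℂ) * z)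
          (-Complex.I * (α : ℂ)) ((τ : ℝ) : ℂ) := by
        simpa using (hasDerivAt_id ((τ : ℝ) : ℂ)).const_mul (-Complex.I * (α : ℂ))
      have h1 := (Complex.hasDerivAt_exp (-Complex.I * (α : ℂ) * (τ : ℂ))).comp (τ : ℂ) h2
      have h4 := HasDerivAt.comp_ofReal
        (by simpa [Function.comp_def] using h1 :
          HasDerivAt (fun z : ℂ => Complex.exp (-Complex.I * (α : ℂ) * z))
            (Complex.exp (-Complex.I * (α : ℂ) * (τ : ℂ)) * (-Complex.I * (α : ℂ))) ((τ : ℝ) : ℂ))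
      exact (h4.const_mul (r : ℂ)).mul_const _
    convert hder using 1
    have hEτ : Complex.exp (-Complex.I * (α : ℂ) * (τ : ℂ)) = E τ := rfl
    have hwj : Complex.exp (2 * (Real.pi : ℂ) * Complex.I * ((j : ℂ) - 1) / (N : ℂ)) = w j := rfl
    rw [hEτ, hwj]
    have hsplit : (Finset.range (N + 1)).erase j = insert 0 ((Finset.Icc 1 N).erase j) := by
      ext k
      simp only [Finset.mem_erase, Finset.mem_range, Finset.mem_insert, Finset.mem_Icc]
      omega
    have h0nm : 0 ∉ (Finset.Icc 1 N).erase j := by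
      simp only [Finset.mem_erase, Finset.mem_Icc]
      omega
    rw [hsplit, Finset.sum_insert h0nm]
    have hmain : ∑ k ∈ (Finset.Icc 1 N).erase j,
        (κf k : ℂ) * (Z j τ - Z k τ) / ((‖Z j τ - Z k τ‖ : ℂ) ^ 2)
        = (κ : ℂ) * E τ / (r : ℂ) * (((N : ℂ) - 1) / 2 * w j) := by
      have hstep : ∀ k ∈ (Finset.Icc 1 N).erase j,
          (κf k : ℂ) * (Z j τ - Z k τ) / ((‖Z j τ - Z k τ‖ : ℂ) ^ 2)
          = (κ : ℂ) * E τ / (r : ℂ) *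
            ((w j - w k) / ((‖w j - w k‖ : ℂ) ^ 2)) := by
        intro k hk
        obtain ⟨hkj, hk'⟩ := Finset.mem_erase.mp hk
        have hk1 := (Finset.mem_Icc.mp hk').1
        have hkN := (Finset.mem_Icc.mp hk').2
        rw [hκj k hk', hZj' j hjm τ, hZj' k hk' τ]
        have hfac : (r : ℂ) * E τ * w j - (r : ℂ) * E τ * w k
            = (r : ℂ) * E τ * (w j - w k) := by ring
        rw [hfac, norm_mul, norm_mul, Complex.norm_real, Real.norm_eq_abs, hEabs, abs_of_pos hr]
        have hd0 : w j - w k ≠ 0 := by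
          rw [hwz j hj1, hwz k hk1]
          intro hc
          have := hprim.pow_inj (by omega : j - 1 < N) (by omega : k - 1 < N)
            (by linear_combination hc)
          omega
        have habs0 : ‖w j - w k‖ ≠ 0 := norm_ne_zero_iff.mpr hd0
        have habs0' : ((‖w j - w k‖ : ℝ) : ℂ) ≠ 0 := Complex.ofReal_ne_zero.mpr habs0
        push_cast
        field_simp
      rw [Finset.sum_congr rfl hstep, ← Finset.mul_sum]
      congr 1
      have hbij : ∑ k ∈ (Finset.Icc 1 N).erase j,
          (w j - w k) / ((‖w j - w k‖ : ℂ) ^ 2)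
          = ∑ m ∈ Finset.Icc 1 (N - 1), w j * (ζ ^ m / (ζ ^ m - 1)) := by
        refine Finset.sum_nbij' (fun k => if k < j then k + N - j else k - j)
          (fun m => if m + j ≤ N then m + j else m + j - N) ?_ ?_ ?_ ?_ ?_ <;>
          intro a ha <;>
          simp only [Finset.mem_erase, Finset.mem_Icc] at ha ⊢
        · split_ifs <;> omega
        · split_ifs <;> omega
        · split_ifs <;> omega
        · split_ifs <;> omega
        · -- value equality
          have haj := ha.1
          have ha1 := ha.2.1
          have haN := ha.2.2
          set m := if a < j then a + N - j else a - j with hm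
          have hm1 : 1 ≤ m := by rw [hm]; split_ifs <;> omega
          have hmN : m < N := by rw [hm]; split_ifs <;> omega
          have hwk : w a = w j * ζ ^ m := by
            rw [hwz j hj1, hwz a ha1, ← pow_add]
            by_cases hlt : a < j
            · have harg : j - 1 + m = a - 1 + N := by
                rw [hm, if_pos hlt]; omega
              rw [harg, pow_add, hζN, mul_one]
            · have harg : j - 1 + m = a - 1 := by
                rw [hm, if_neg hlt]; omega
              rw [harg]
          rw [hwk]
          exact hterm (ζ ^ m) (habsζ m) (hprim.pow_ne_one_of_pos_of_lt (by omega) hmN)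
            (w j) (hwabs j hj1)
      rw [hbij, ← Finset.mul_sum, pair_sum N hN ζ hprim]
      ring
    rw [hmain, hκ0, hZ0]
    rw [show ((fun _ : ℝ => (0 : ℂ)) τ) = 0 from rfl, sub_zero]
    rw [hκj j hjm, hZj' j hjm τ]
    have habsZj : ‖(r : ℂ) * E τ * w j‖ = r := by
      rw [norm_mul, norm_mul, Complex.norm_real, Real.norm_eq_abs, hEabs, hwabs j hj1, abs_of_pos hr]
      ring
    have hαC : (α : ℂ) = (κ : ℂ) / (4 * (Real.pi : ℂ)) * (1 / (h : ℂ) ^ 2 - ((N : ℂ) - 1) / (r : ℂ) ^ 2)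
        - (μ : ℂ) / (2 * (Real.pi : ℂ) * (r : ℂ) ^ 2) := by
      rw [hα]; push_cast; ring
    rw [habsZj, hαC]
    clear_value ζ w E
    field_simp
    ring
end

section
/- Let h > 0, κ₁, κ₂ > 0 and λ₁, λ₂ > 0. The system ∂_τ Z_j = (1/(4π))( −(iκ_j/h²) Z_j + 2i κ_{3−j}(Z_j − Z_{3−j})/|Z_j − Z_{3−j}|² ), j = 1, 2, admits a solution of the form Z₁(τ) = λ₁ e^{−iατ}, Z₂(τ) = −λ₂ e^{−iατ} for some real α if and only if κ₂/κ₁ = (2λ₁h² + λ₁λ₂(λ₁+λ₂)) / (2λ₂h² + λ₁λ₂(λ₁+λ₂)); and in that case α = κ₁/(4πh²) − κ₂/(2πλ₁(λ₁+λ₂)) = κ₂/(4πh²) − κ₁/(2πλ₂(λ₁+λ₂)). -/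
/-- `Z₁(τ) = l₁ e^{-iατ}`, `Z₂(τ) = -l₂ e^{-iατ}` solve the two-filament
nearly parallel vortex filament system with pitch `h` and circulations `κ₁, κ₂`. -/
def IsCorotPairSol (h κ₁ κ₂ l₁ l₂ α : ℝ) : Prop :=
  ∀ Z₁ Z₂ : ℝ → ℂ,
    Z₁ = (fun τ : ℝ => (l₁ : ℂ) * Complex.exp (-Complex.I * (α : ℂ) * (τ : ℂ))) →
    Z₂ = (fun τ : ℝ => -(l₂ : ℂ) * Complex.exp (-Complex.I * (α : ℂ) * (τ : ℂ))) →
    (∀ τ : ℝ,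
      HasDerivAt Z₁
        ((1 / (4 * (Real.pi : ℂ))) *
          (-(Complex.I * (κ₁ : ℂ) / (h : ℂ) ^ 2) * Z₁ τ +
            2 * Complex.I * (κ₂ : ℂ) * (Z₁ τ - Z₂ τ) /
              ((‖Z₁ τ - Z₂ τ‖ : ℂ) ^ 2))) τ) ∧
    (∀ τ : ℝ,
      HasDerivAt Z₂
        ((1 / (4 * (Real.pi : ℂ))) *
          (-(Complex.I * (κ₂ : ℂ) / (h : ℂ) ^ 2) * Z₂ τ +
            2 * Complex.I * (κ₁ : ℂ) * (Z₂ τ - Z₁ τ) /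
              ((‖Z₂ τ - Z₁ τ‖ : ℂ) ^ 2))) τ)

private lemma hder_aux (c : ℂ) (α τ : ℝ) :
    HasDerivAt (fun t : ℝ => c * Complex.exp (-Complex.I * (α : ℂ) * (t : ℂ)))
      (c * (-Complex.I * α) * Complex.exp (-Complex.I * (α : ℂ) * (τ : ℂ))) τ := by
  have h0 : HasDerivAt (fun z : ℂ => -Complex.I * (α : ℂ) * z) (-Complex.I * (α : ℂ)) (τ : ℂ) := by
    simpa using (hasDerivAt_id (τ : ℂ)).const_mul (-Complex.I * (α : ℂ))
  have h1 := (h0.cexp).const_mul c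
  have h2 : HasDerivAt (fun z : ℂ => c * Complex.exp (-Complex.I * (α : ℂ) * z))
      (c * (-Complex.I * α) * Complex.exp (-Complex.I * (α : ℂ) * (τ : ℂ))) (τ : ℂ) := by
    exact h1.congr_deriv (by ring)
  exact h2.comp_ofReal

private lemma absE (α τ : ℝ) : ‖Complex.exp (-Complex.I * (α : ℂ) * (τ : ℂ))‖ = 1 := by
  rw [Complex.norm_exp]
  simp [Complex.mul_re]

private lemma eqI (x y : ℝ) : (x : ℂ) * Complex.I = (y : ℂ) * Complex.I ↔ x = y := by
  constructor
  · intro hxy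
    exact_mod_cast mul_right_cancel₀ Complex.I_ne_zero hxy
  · intro hxy; rw [hxy]

private lemma key (h κ₁ κ₂ l₁ l₂ α : ℝ) (hh : 0 < h)
    (hl₁ : 0 < l₁) (hl₂ : 0 < l₂) :
    IsCorotPairSol h κ₁ κ₂ l₁ l₂ α ↔
      (-(α * l₁) = 1 / (4 * Real.pi) * (-(κ₁ * l₁) / h ^ 2 + 2 * κ₂ / (l₁ + l₂)) ∧
       α * l₂ = 1 / (4 * Real.pi) * (κ₂ * l₂ / h ^ 2 - 2 * κ₁ / (l₁ + l₂))) := by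
  have hL : (0:ℝ) < l₁ + l₂ := by linarith
  have hLne : (l₁ + l₂ : ℝ) ≠ 0 := ne_of_gt hL
  have hLCne : ((l₁ : ℂ) + (l₂ : ℂ)) ≠ 0 := by
    have : ((l₁ + l₂ : ℝ) : ℂ) ≠ 0 := by exact_mod_cast hLne
    push_cast at this; exact this
  have hfrac : ((l₁ : ℂ) + l₂) / ((l₁ : ℂ) + l₂) ^ 2 = 1 / ((l₁ : ℂ) + l₂) := by
    rw [sq, ← div_div, div_self hLCne]
  set Z₁ : ℝ → ℂ := fun τ : ℝ => (l₁ : ℂ) * Complex.exp (-Complex.I * (α : ℂ) * (τ : ℂ)) with hZ₁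
  set Z₂ : ℝ → ℂ := fun τ : ℝ => -(l₂ : ℂ) * Complex.exp (-Complex.I * (α : ℂ) * (τ : ℂ)) with hZ₂
  have hdiff : ∀ τ : ℝ, Z₁ τ - Z₂ τ =
      ((l₁ + l₂ : ℝ) : ℂ) * Complex.exp (-Complex.I * (α : ℂ) * (τ : ℂ)) := by
    intro τ; simp only [hZ₁, hZ₂]; push_cast; ring
  have habs : ∀ τ : ℝ, (‖Z₁ τ - Z₂ τ‖ : ℝ) = l₁ + l₂ := by
    intro τ
    rw [hdiff τ, norm_mul, absE, mul_one, Complex.norm_real, Real.norm_eq_abs, abs_of_pos hL]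
  have habs2 : ∀ τ : ℝ, (‖Z₂ τ - Z₁ τ‖ : ℝ) = l₁ + l₂ := by
    intro τ
    rw [show Z₂ τ - Z₁ τ = -(Z₁ τ - Z₂ τ) by ring, norm_neg, habs]
  constructor
  · intro hs
    obtain ⟨h1, h2⟩ := hs Z₁ Z₂ rfl rfl
    have e1 := (hder_aux (l₁ : ℂ) α 0).unique (h1 0)
    have e2 := (hder_aux (-(l₂ : ℂ)) α 0).unique (h2 0)
    rw [habs 0] at e1
    rw [habs2 0] at e2
    simp only [hZ₁, hZ₂, Complex.ofReal_zero, mul_zero, Complex.exp_zero, mul_one] at e1 e2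
    push_cast at e1 e2
    constructor
    · rw [← eqI]
      push_cast
      linear_combination e1 + (2 * Complex.I * (κ₂ : ℂ) / (4 * (Real.pi : ℂ))) * hfrac
    · rw [← eqI]
      push_cast
      linear_combination e2 + (-2 * Complex.I * (κ₁ : ℂ) / (4 * (Real.pi : ℂ))) * hfrac
  · rintro ⟨e1, e2⟩
    have e1C : ((-(α * l₁) : ℝ) : ℂ) =
        ((1 / (4 * Real.pi) * (-(κ₁ * l₁) / h ^ 2 + 2 * κ₂ / (l₁ + l₂)) : ℝ) : ℂ) := by
      exact_mod_cast e1
    have e2C : ((α * l₂ : ℝ) : ℂ) =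
        ((1 / (4 * Real.pi) * (κ₂ * l₂ / h ^ 2 - 2 * κ₁ / (l₁ + l₂)) : ℝ) : ℂ) := by
      exact_mod_cast e2
    push_cast at e1C e2C
    have e1x : (l₁ : ℂ) * (-Complex.I * α) =
        1 / (4 * (Real.pi : ℂ)) * (-(Complex.I * (κ₁ : ℂ) / (h : ℂ) ^ 2) * l₁ +
          2 * Complex.I * (κ₂ : ℂ) / ((l₁ : ℂ) + l₂)) := by
      linear_combination Complex.I * e1C
    have e2x : -(l₂ : ℂ) * (-Complex.I * α) =
        1 / (4 * (Real.pi : ℂ)) * (-(Complex.I * (κ₂ : ℂ) / (h : ℂ) ^ 2) * (-(l₂ : ℂ)) -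
          2 * Complex.I * (κ₁ : ℂ) / ((l₁ : ℂ) + l₂)) := by
      linear_combination Complex.I * e2C
    intro W₁ W₂ hW₁ hW₂
    subst hW₁; subst hW₂
    constructor
    · intro τ
      have hd := hder_aux (l₁ : ℂ) α τ
      rw [show (fun τ : ℝ => (l₁ : ℂ) * Complex.exp (-Complex.I * (α : ℂ) * (τ : ℂ))) = Z₁ from rfl,
        show (fun τ : ℝ => -(l₂ : ℂ) * Complex.exp (-Complex.I * (α : ℂ) * (τ : ℂ))) = Z₂ from rfl]
      rw [habs τ, hdiff τ]
      simp only [hZ₁]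
      convert hd using 1
      push_cast
      linear_combination (-(Complex.exp (-Complex.I * (α : ℂ) * (τ : ℂ)))) * e1x +
        (2 * Complex.I * (κ₂ : ℂ) * Complex.exp (-Complex.I * (α : ℂ) * (τ : ℂ)) /
          (4 * (Real.pi : ℂ))) * hfrac
    · intro τ
      have hd := hder_aux (-(l₂ : ℂ)) α τ
      rw [show (fun τ : ℝ => (l₁ : ℂ) * Complex.exp (-Complex.I * (α : ℂ) * (τ : ℂ))) = Z₁ from rfl,
        show (fun τ : ℝ => -(l₂ : ℂ) * Complex.exp (-Complex.I * (α : ℂ) * (τ : ℂ))) = Z₂ from rfl]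
      rw [habs2 τ, show Z₂ τ - Z₁ τ = -(Z₁ τ - Z₂ τ) by ring, hdiff τ]
      simp only [hZ₂]
      convert hd using 1
      push_cast
      linear_combination (-(Complex.exp (-Complex.I * (α : ℂ) * (τ : ℂ)))) * e2x +
        (-2 * Complex.I * (κ₁ : ℂ) * Complex.exp (-Complex.I * (α : ℂ) * (τ : ℂ)) /
          (4 * (Real.pi : ℂ))) * hfrac

theorem corotating_asymmetric_pair
    (h κ₁ κ₂ l₁ l₂ : ℝ) (hh : 0 < h) (hκ₁ : 0 < κ₁) (hκ₂ : 0 < κ₂)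
    (hl₁ : 0 < l₁) (hl₂ : 0 < l₂) :
    ((∃ α : ℝ, IsCorotPairSol h κ₁ κ₂ l₁ l₂ α) ↔
      κ₂ / κ₁ = (2 * l₁ * h ^ 2 + l₁ * l₂ * (l₁ + l₂)) /
        (2 * l₂ * h ^ 2 + l₁ * l₂ * (l₁ + l₂))) ∧
    (∀ α : ℝ, IsCorotPairSol h κ₁ κ₂ l₁ l₂ α →
      α = κ₁ / (4 * Real.pi * h ^ 2) - κ₂ / (2 * Real.pi * l₁ * (l₁ + l₂)) ∧
      α = κ₂ / (4 * Real.pi * h ^ 2) - κ₁ / (2 * Real.pi * l₂ * (l₁ + l₂))) := by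
  have hL : (0:ℝ) < l₁ + l₂ := by linarith
  have hLne : (l₁ + l₂ : ℝ) ≠ 0 := ne_of_gt hL
  have hπ : (0:ℝ) < Real.pi := Real.pi_pos
  have hπne : Real.pi ≠ 0 := ne_of_gt hπ
  have hhne : h ≠ 0 := ne_of_gt hh
  have hκ₁ne : κ₁ ≠ 0 := ne_of_gt hκ₁
  have hl₁ne : l₁ ≠ 0 := ne_of_gt hl₁
  have hl₂ne : l₂ ≠ 0 := ne_of_gt hl₂
  have hD : (0:ℝ) < 2 * l₂ * h ^ 2 + l₁ * l₂ * (l₁ + l₂) := by positivity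
  have hDne := ne_of_gt hD
  constructor
  · constructor
    · rintro ⟨α, hα⟩
      rw [key h κ₁ κ₂ l₁ l₂ α hh hl₁ hl₂] at hα
      obtain ⟨e1, e2⟩ := hα
      rw [div_eq_div_iff hκ₁ne hDne]
      field_simp at e1 e2
      linear_combination (-l₂) * e1 + (-l₁) * e2
    · intro hr
      rw [div_eq_div_iff hκ₁ne hDne] at hr
      refine ⟨κ₁ / (4 * Real.pi * h ^ 2) - κ₂ / (2 * Real.pi * l₁ * (l₁ + l₂)), ?_⟩
      rw [key h κ₁ κ₂ l₁ l₂ _ hh hl₁ hl₂]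
      constructor
      · field_simp
        ring
      · field_simp
        linear_combination (-2) * hr
  · intro α hα
    rw [key h κ₁ κ₂ l₁ l₂ α hh hl₁ hl₂] at hα
    obtain ⟨e1, e2⟩ := hα
    constructor
    · field_simp at e1 ⊢
      linear_combination (-2) * e1
    · field_simp at e2 ⊢
      linear_combination 2 * e2
end

section
/- Let h > 0, κ, μ > 0, λ₁, λ₂ > 0 satisfy κ/(4πh²) − κ/(4πλ₁²) − μ/(π(λ₁²+λ₂²)) = μ/(4πh²) − μ/(4πλ₂²) − κ/(π(λ₁²+λ₂²)), and let α denote this common value. Set Z₁(τ) = λ₁e^{−iατ}, Z₃(τ) = −λ₁e^{−iατ}, Z₂(τ) = iλ₂e^{−iατ}, Z₄(τ) = −iλ₂e^{−iατ}, with circulations κ₁ = κ₃ = κ and κ₂ = κ₄ = μ. Then for each j = 1,…,4, ∂_τ Z_j = (1/(4π))( −(iκ_j/h²) Z_j + 2i ∑_{k≠j} κ_k (Z_j − Z_k)/|Z_j − Z_k|² ). -/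
private lemma helexp (α τ : ℝ) :
    HasDerivAt (fun τ : ℝ => Complex.exp (-Complex.I * (α : ℂ) * (τ : ℂ)))
      (Complex.exp (-Complex.I * (α : ℂ) * (τ : ℂ)) * (-Complex.I * (α : ℂ))) τ := by
  have h1 : HasDerivAt (fun z : ℂ => Complex.exp (-Complex.I * (α : ℂ) * z))
      (Complex.exp (-Complex.I * (α : ℂ) * (τ : ℂ)) * (-Complex.I * (α : ℂ))) (τ : ℂ) := by
    simpa using ((hasDerivAt_id ((τ : ℝ) : ℂ)).const_mul (-Complex.I * (α : ℂ))).cexp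
  exact h1.comp_ofReal

theorem corotating_two_times_two_helical_solution
    (h κ μ l₁ l₂ α : ℝ) (hh : 0 < h) (hκ : 0 < κ) (hμ : 0 < μ) (hl₁ : 0 < l₁) (hl₂ : 0 < l₂)
    (hα₁ : α = κ / (4 * Real.pi * h ^ 2) - κ / (4 * Real.pi * l₁ ^ 2) -
      μ / (Real.pi * (l₁ ^ 2 + l₂ ^ 2)))
    (hα₂ : α = μ / (4 * Real.pi * h ^ 2) - μ / (4 * Real.pi * l₂ ^ 2) -
      κ / (Real.pi * (l₁ ^ 2 + l₂ ^ 2)))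
    (κf : ℕ → ℝ) (hκ1 : κf 1 = κ) (hκ3 : κf 3 = κ) (hκ2 : κf 2 = μ) (hκ4 : κf 4 = μ)
    (Z : ℕ → ℝ → ℂ)
    (hZ1 : Z 1 = fun τ : ℝ => (l₁ : ℂ) * Complex.exp (-Complex.I * (α : ℂ) * (τ : ℂ)))
    (hZ3 : Z 3 = fun τ : ℝ => -(l₁ : ℂ) * Complex.exp (-Complex.I * (α : ℂ) * (τ : ℂ)))
    (hZ2 : Z 2 = fun τ : ℝ => Complex.I * (l₂ : ℂ) * Complex.exp (-Complex.I * (α : ℂ) * (τ : ℂ)))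
    (hZ4 : Z 4 = fun τ : ℝ => -(Complex.I * (l₂ : ℂ)) * Complex.exp (-Complex.I * (α : ℂ) * (τ : ℂ))) :
    ∀ j ∈ Finset.Icc 1 4, ∀ τ : ℝ,
      HasDerivAt (Z j)
        ((1 / (4 * (Real.pi : ℂ))) *
          (-(Complex.I * (κf j : ℂ) / (h : ℂ) ^ 2) * Z j τ +
            2 * Complex.I * ∑ k ∈ (Finset.Icc 1 4).erase j,
              (κf k : ℂ) * (Z j τ - Z k τ) /
                ((‖Z j τ - Z k τ‖ : ℂ) ^ 2))) τ := by
  have hA1 : (α : ℂ) = (κ : ℂ) / (4 * (Real.pi : ℂ) * (h : ℂ) ^ 2) -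
      (κ : ℂ) / (4 * (Real.pi : ℂ) * (l₁ : ℂ) ^ 2) -
      (μ : ℂ) / (Real.pi : ℂ) / ((l₁ : ℂ) ^ 2 + (l₂ : ℂ) ^ 2) := by
    rw [div_div, hα₁]; push_cast; ring
  have hA2 : (α : ℂ) = (μ : ℂ) / (4 * (Real.pi : ℂ) * (h : ℂ) ^ 2) -
      (μ : ℂ) / (4 * (Real.pi : ℂ) * (l₂ : ℂ) ^ 2) -
      (κ : ℂ) / (Real.pi : ℂ) / ((l₁ : ℂ) ^ 2 + (l₂ : ℂ) ^ 2) := by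
    rw [div_div, hα₂]; push_cast; ring
  intro j hj τ
  have habsE : ‖Complex.exp (-Complex.I * (α : ℂ) * (τ : ℂ))‖ = 1 := by
    simp [Complex.norm_exp]
  rw [Finset.mem_Icc] at hj
  obtain ⟨hj1, hj2⟩ := hj
  interval_cases j
  · -- j = 1
    rw [show ((Finset.Icc 1 4).erase 1) = ({2, 3, 4} : Finset ℕ) from by decide,
      Finset.sum_insert (by decide), Finset.sum_insert (by decide), Finset.sum_singleton]
    simp only [hZ1, hZ2, hZ3, hZ4, hκ1, hκ2, hκ3, hκ4]
    convert (helexp α τ).const_mul (l₁ : ℂ) using 1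
    · rfl
    set E := Complex.exp (-Complex.I * (α : ℂ) * (τ : ℂ)) with hEdef
    clear_value E
    have key : ∀ c : ℂ, ((‖c * E‖ : ℝ) : ℂ) ^ 2 = ((Complex.normSq c : ℝ) : ℂ) := by
      intro c
      rw [norm_mul, habsE, mul_one]
      norm_cast
      exact Complex.sq_norm c
    rw [show (l₁ : ℂ) * E - Complex.I * (l₂ : ℂ) * E = ((l₁ : ℂ) - Complex.I * l₂) * E from by ring,
       show (l₁ : ℂ) * E - -(l₁ : ℂ) * E = ((2 : ℂ) * l₁) * E from by ring,
       show (l₁ : ℂ) * E - -(Complex.I * (l₂ : ℂ)) * E = ((l₁ : ℂ) + Complex.I * l₂) * E from by ring,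
       key, key, key,
       show ((Complex.normSq ((l₁ : ℂ) - Complex.I * l₂) : ℝ) : ℂ) = (l₁:ℂ)^2 + (l₂:ℂ)^2 from by
         simp [Complex.normSq_apply]; push_cast; ring,
       show ((Complex.normSq ((2 : ℂ) * l₁) : ℝ) : ℂ) = 4 * (l₁:ℂ)^2 from by
         simp [Complex.normSq_apply]; push_cast; ring,
       show ((Complex.normSq ((l₁ : ℂ) + Complex.I * l₂) : ℝ) : ℂ) = (l₁:ℂ)^2 + (l₂:ℂ)^2 from by
         simp [Complex.normSq_apply]; push_cast; ring]
    linear_combination (Complex.I * (l₁ : ℂ) * E) * hA1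
  · -- j = 2
    rw [show ((Finset.Icc 1 4).erase 2) = ({1, 3, 4} : Finset ℕ) from by decide,
      Finset.sum_insert (by decide), Finset.sum_insert (by decide), Finset.sum_singleton]
    simp only [hZ1, hZ2, hZ3, hZ4, hκ1, hκ2, hκ3, hκ4]
    convert (helexp α τ).const_mul (Complex.I * (l₂ : ℂ)) using 1
    · rfl
    set E := Complex.exp (-Complex.I * (α : ℂ) * (τ : ℂ)) with hEdef
    clear_value E
    have key : ∀ c : ℂ, ((‖c * E‖ : ℝ) : ℂ) ^ 2 = ((Complex.normSq c : ℝ) : ℂ) := by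
      intro c
      rw [norm_mul, habsE, mul_one]
      norm_cast
      exact Complex.sq_norm c
    rw [show Complex.I * (l₂ : ℂ) * E - (l₁ : ℂ) * E = (Complex.I * l₂ - (l₁ : ℂ)) * E from by ring,
       show Complex.I * (l₂ : ℂ) * E - -(l₁ : ℂ) * E = (Complex.I * l₂ + (l₁ : ℂ)) * E from by ring,
       show Complex.I * (l₂ : ℂ) * E - -(Complex.I * (l₂ : ℂ)) * E = ((2 : ℂ) * Complex.I * l₂) * E from by ring,
       key, key, key,
       show ((Complex.normSq (Complex.I * (l₂ : ℂ) - (l₁ : ℂ)) : ℝ) : ℂ) = (l₁:ℂ)^2 + (l₂:ℂ)^2 from by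
         simp [Complex.normSq_apply]; ring,
       show ((Complex.normSq (Complex.I * (l₂ : ℂ) + (l₁ : ℂ)) : ℝ) : ℂ) = (l₁:ℂ)^2 + (l₂:ℂ)^2 from by
         simp [Complex.normSq_apply]; ring,
       show ((Complex.normSq ((2 : ℂ) * Complex.I * (l₂ : ℂ)) : ℝ) : ℂ) = 4 * (l₂:ℂ)^2 from by
         simp [Complex.normSq_apply]; ring]
    linear_combination (Complex.I ^ 2 * (l₂ : ℂ) * E) * hA2
  · -- j = 3
    rw [show ((Finset.Icc 1 4).erase 3) = ({1, 2, 4} : Finset ℕ) from by decide,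
      Finset.sum_insert (by decide), Finset.sum_insert (by decide), Finset.sum_singleton]
    simp only [hZ1, hZ2, hZ3, hZ4, hκ1, hκ2, hκ3, hκ4]
    convert (helexp α τ).const_mul (-(l₁ : ℂ)) using 1
    · rfl
    set E := Complex.exp (-Complex.I * (α : ℂ) * (τ : ℂ)) with hEdef
    clear_value E
    have key : ∀ c : ℂ, ((‖c * E‖ : ℝ) : ℂ) ^ 2 = ((Complex.normSq c : ℝ) : ℂ) := by
      intro c
      rw [norm_mul, habsE, mul_one]
      norm_cast
      exact Complex.sq_norm c
    rw [show -(l₁ : ℂ) * E - (l₁ : ℂ) * E = (-(2 : ℂ) * l₁) * E from by ring,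
       show -(l₁ : ℂ) * E - Complex.I * (l₂ : ℂ) * E = (-(l₁ : ℂ) - Complex.I * l₂) * E from by ring,
       show -(l₁ : ℂ) * E - -(Complex.I * (l₂ : ℂ)) * E = (-(l₁ : ℂ) + Complex.I * l₂) * E from by ring,
       key, key, key,
       show ((Complex.normSq (-(2 : ℂ) * (l₁ : ℂ)) : ℝ) : ℂ) = 4 * (l₁:ℂ)^2 from by
         simp [Complex.normSq_apply]; ring,
       show ((Complex.normSq (-(l₁ : ℂ) - Complex.I * (l₂ : ℂ)) : ℝ) : ℂ) = (l₁:ℂ)^2 + (l₂:ℂ)^2 from by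
         simp [Complex.normSq_apply]; ring,
       show ((Complex.normSq (-(l₁ : ℂ) + Complex.I * (l₂ : ℂ)) : ℝ) : ℂ) = (l₁:ℂ)^2 + (l₂:ℂ)^2 from by
         simp [Complex.normSq_apply]; ring]
    linear_combination (-(Complex.I) * (l₁ : ℂ) * E) * hA1
  · -- j = 4
    rw [show ((Finset.Icc 1 4).erase 4) = ({1, 2, 3} : Finset ℕ) from by decide,
      Finset.sum_insert (by decide), Finset.sum_insert (by decide), Finset.sum_singleton]
    simp only [hZ1, hZ2, hZ3, hZ4, hκ1, hκ2, hκ3, hκ4]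
    convert (helexp α τ).const_mul (-(Complex.I * (l₂ : ℂ))) using 1
    · rfl
    set E := Complex.exp (-Complex.I * (α : ℂ) * (τ : ℂ)) with hEdef
    clear_value E
    have key : ∀ c : ℂ, ((‖c * E‖ : ℝ) : ℂ) ^ 2 = ((Complex.normSq c : ℝ) : ℂ) := by
      intro c
      rw [norm_mul, habsE, mul_one]
      norm_cast
      exact Complex.sq_norm c
    rw [show -(Complex.I * (l₂ : ℂ)) * E - (l₁ : ℂ) * E = (-(l₁ : ℂ) - Complex.I * l₂) * E from by ring,
       show -(Complex.I * (l₂ : ℂ)) * E - Complex.I * (l₂ : ℂ) * E = (-(2 : ℂ) * Complex.I * l₂) * E from by ring,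
       show -(Complex.I * (l₂ : ℂ)) * E - -(l₁ : ℂ) * E = ((l₁ : ℂ) - Complex.I * l₂) * E from by ring,
       key, key, key,
       show ((Complex.normSq (-(l₁ : ℂ) - Complex.I * (l₂ : ℂ)) : ℝ) : ℂ) = (l₁:ℂ)^2 + (l₂:ℂ)^2 from by
         simp [Complex.normSq_apply]; ring,
       show ((Complex.normSq (-(2 : ℂ) * Complex.I * (l₂ : ℂ)) : ℝ) : ℂ) = 4 * (l₂:ℂ)^2 from by
         simp [Complex.normSq_apply]; ring,
       show ((Complex.normSq ((l₁ : ℂ) - Complex.I * (l₂ : ℂ)) : ℝ) : ℂ) = (l₁:ℂ)^2 + (l₂:ℂ)^2 from by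
         simp [Complex.normSq_apply]; ring]
    linear_combination (-(Complex.I ^ 2) * (l₂ : ℂ) * E) * hA2
end

section
/- Let h > 0, κ₁, κ₂ > 0 and λ₁*, λ₂* > 0 satisfy κ₂/κ₁ = (2λ₁*h² + λ₁*λ₂*(λ₁*+λ₂*))/(2λ₂*h² + λ₁*λ₂*(λ₁*+λ₂*)). Set β_i = κ_i/(2π) and α = κ₁/(4πh²) − κ₂/(2πλ₁*(λ₁*+λ₂*)). Define H₃(λ₁,λ₂) = (1/2)∑_{i=1}^{2} (β_i(2αh² − β_i)/h²) λ_i² + 2β₁β₂ ln(λ₁+λ₂) on (0,∞)². Then (λ₁*, λ₂*) is a critical point of H₃, the Hessian ∇²H₃(λ₁*,λ₂*) is negative definite, and (λ₁*,λ₂*) is the unique critical point of H₃ in a neighborhood of itself and a strict local maximizer. -/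
open ContinuousLinearMap

lemma rea_auxApply (c1 c2 c3 : ℝ) (v : ℝ × ℝ) :
    (c1 • (fst ℝ ℝ ℝ) + c2 • (snd ℝ ℝ ℝ) + c3 • (fst ℝ ℝ ℝ + snd ℝ ℝ ℝ)) v
      = c1 * v.1 + c2 * v.2 + c3 * (v.1 + v.2) := by
  simp [smul_eq_mul]
  ring

lemma rea_auxA (a1 a2 K : ℝ) (p : ℝ × ℝ) (hp : p.1 + p.2 ≠ 0) :
    HasFDerivAt (fun q : ℝ × ℝ => (a1/2) * (q.1 * q.1) + (a2/2) * (q.2 * q.2) + K * Real.log (q.1 + q.2))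
      ((a1 * p.1) • (fst ℝ ℝ ℝ) + (a2 * p.2) • (snd ℝ ℝ ℝ)
        + (K / (p.1 + p.2)) • (fst ℝ ℝ ℝ + snd ℝ ℝ ℝ)) p := by
  have h1 : HasFDerivAt (fun q : ℝ × ℝ => q.1) (fst ℝ ℝ ℝ) p := hasFDerivAt_fst
  have h2 : HasFDerivAt (fun q : ℝ × ℝ => q.2) (snd ℝ ℝ ℝ) p := hasFDerivAt_snd
  have hlog := ((h1.add h2).log hp).const_mul K
  have hsq1 := (h1.mul h1).const_mul (a1/2)
  have hsq2 := (h2.mul h2).const_mul (a2/2)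
  have htot := (hsq1.add hsq2).add hlog
  refine htot.congr_fderiv ?_
  refine ContinuousLinearMap.ext fun v => ?_
  simp [smul_eq_mul]
  ring

lemma rea_auxB (a1 a2 K c1 c2 : ℝ) (l : ℝ × ℝ) (hp : l.1 + l.2 ≠ 0) :
    HasFDerivAt (fun q : ℝ × ℝ => a1 * q.1 * c1 + a2 * q.2 * c2 + K / (q.1 + q.2) * (c1 + c2))
      ((a1 * c1) • (fst ℝ ℝ ℝ) + (a2 * c2) • (snd ℝ ℝ ℝ)
        + (-(K * (c1 + c2) / (l.1 + l.2) ^ 2)) • (fst ℝ ℝ ℝ + snd ℝ ℝ ℝ)) l := by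
  have h1 : HasFDerivAt (fun q : ℝ × ℝ => q.1) (fst ℝ ℝ ℝ) l := hasFDerivAt_fst
  have h2 : HasFDerivAt (fun q : ℝ × ℝ => q.2) (snd ℝ ℝ ℝ) l := hasFDerivAt_snd
  have hinv0 : HasFDerivAt (fun q : ℝ × ℝ => (q.1 + q.2)⁻¹)
      ((-((l.1 + l.2) ^ 2)⁻¹) • (fst ℝ ℝ ℝ + snd ℝ ℝ ℝ)) l :=
    (hasDerivAt_inv hp).comp_hasFDerivAt l (h1.add h2)
  have hinv := hinv0.const_mul (K * (c1 + c2))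
  have ht1 := (h1.const_mul a1).mul_const c1
  have ht2 := (h2.const_mul a2).mul_const c2
  have htot := (ht1.add ht2).add hinv
  have heq : (fun q : ℝ × ℝ => a1 * q.1 * c1 + a2 * q.2 * c2 + K / (q.1 + q.2) * (c1 + c2))
      = fun q : ℝ × ℝ => a1 * q.1 * c1 + a2 * q.2 * c2 + K * (c1 + c2) * (q.1 + q.2)⁻¹ := by
    funext q; ring
  rw [heq]
  refine htot.congr_fderiv ?_
  refine ContinuousLinearMap.ext fun v => ?_
  simp [smul_eq_mul]
  ring

theorem reduced_energy_asymmetric_pair (h κ₁ κ₂ l₁ l₂ : ℝ)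
    (hh : 0 < h) (hκ₁ : 0 < κ₁) (hκ₂ : 0 < κ₂) (hl₁ : 0 < l₁) (hl₂ : 0 < l₂)
    (hcompat : κ₂ / κ₁ = (2 * l₁ * h ^ 2 + l₁ * l₂ * (l₁ + l₂)) /
      (2 * l₂ * h ^ 2 + l₁ * l₂ * (l₁ + l₂)))
    (β₁ β₂ α : ℝ) (hβ₁ : β₁ = κ₁ / (2 * Real.pi)) (hβ₂ : β₂ = κ₂ / (2 * Real.pi))
    (hα : α = κ₁ / (4 * Real.pi * h ^ 2) - κ₂ / (2 * Real.pi * l₁ * (l₁ + l₂)))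
    (H₃ : ℝ × ℝ → ℝ)
    (hH₃ : ∀ p : ℝ × ℝ, H₃ p =
      (1 / 2) * ((β₁ * (2 * α * h ^ 2 - β₁) / h ^ 2) * p.1 ^ 2 +
        (β₂ * (2 * α * h ^ 2 - β₂) / h ^ 2) * p.2 ^ 2) +
      2 * β₁ * β₂ * Real.log (p.1 + p.2)) :
    fderiv ℝ H₃ (l₁, l₂) = 0 ∧
    (∀ v : ℝ × ℝ, v ≠ 0 →
      fderiv ℝ (fun p => fderiv ℝ H₃ p v) (l₁, l₂) v < 0) ∧
    (∃ ε > (0 : ℝ), ∀ p : ℝ × ℝ, 0 < p.1 → 0 < p.2 → dist p (l₁, l₂) < ε →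
      p ≠ (l₁, l₂) → fderiv ℝ H₃ p ≠ 0 ∧ H₃ p < H₃ (l₁, l₂)) := by
  have hπ : (0:ℝ) < Real.pi := Real.pi_pos
  have hS : (0:ℝ) < l₁ + l₂ := by positivity
  obtain ⟨a1, ha1def⟩ : ∃ a : ℝ, a = β₁ * (2 * α * h ^ 2 - β₁) / h ^ 2 := ⟨_, rfl⟩
  obtain ⟨a2, ha2def⟩ : ∃ a : ℝ, a = β₂ * (2 * α * h ^ 2 - β₂) / h ^ 2 := ⟨_, rfl⟩
  obtain ⟨K, hKdef⟩ : ∃ a : ℝ, a = 2 * β₁ * β₂ := ⟨_, rfl⟩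
  have hH₃' : ∀ p : ℝ × ℝ, H₃ p =
      (1 / 2) * (a1 * p.1 ^ 2 + a2 * p.2 ^ 2) + K * Real.log (p.1 + p.2) := by
    intro p
    rw [hH₃ p, ← ha1def, ← ha2def]
    rw [show (2 : ℝ) * β₁ * β₂ = K from hKdef.symm]
  clear hH₃
  have hK : 0 < K := by rw [hKdef, hβ₁, hβ₂]; positivity
  have hc : κ₂ * (2 * l₂ * h ^ 2 + l₁ * l₂ * (l₁ + l₂)) =
      κ₁ * (2 * l₁ * h ^ 2 + l₁ * l₂ * (l₁ + l₂)) := by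
    have hd : (0:ℝ) < 2 * l₂ * h ^ 2 + l₁ * l₂ * (l₁ + l₂) := by positivity
    field_simp at hcompat
    linarith
  have key1 : a1 * (l₁ * (l₁ + l₂)) = -K := by
    rw [ha1def, hKdef, hβ₁, hβ₂, hα]
    field_simp
    ring
  have key2 : a2 * (l₂ * (l₁ + l₂)) = -K := by
    rw [ha2def, hKdef, hβ₁, hβ₂, hα]
    field_simp
    linear_combination (-4:ℝ) * hc
  have ha1 : a1 < 0 := by nlinarith only [key1, hK, mul_pos hl₁ hS]
  have ha2 : a2 < 0 := by nlinarith only [key2, hK, mul_pos hl₂ hS]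
  have hH : H₃ = fun q : ℝ × ℝ =>
      (a1 / 2) * (q.1 * q.1) + (a2 / 2) * (q.2 * q.2) + K * Real.log (q.1 + q.2) := by
    funext q
    rw [hH₃' q]
    ring
  have hderiv : ∀ p : ℝ × ℝ, p.1 + p.2 ≠ 0 →
      HasFDerivAt H₃ ((a1 * p.1) • (ContinuousLinearMap.fst ℝ ℝ ℝ)
        + (a2 * p.2) • (ContinuousLinearMap.snd ℝ ℝ ℝ)
        + (K / (p.1 + p.2)) • (ContinuousLinearMap.fst ℝ ℝ ℝ + ContinuousLinearMap.snd ℝ ℝ ℝ)) p := by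
    intro p hp
    rw [hH]
    exact rea_auxA a1 a2 K p hp
  have hfd : ∀ p : ℝ × ℝ, p.1 + p.2 ≠ 0 → ∀ v : ℝ × ℝ,
      fderiv ℝ H₃ p v = a1 * p.1 * v.1 + a2 * p.2 * v.2 + K / (p.1 + p.2) * (v.1 + v.2) := by
    intro p hp v
    rw [(hderiv p hp).fderiv]
    exact rea_auxApply _ _ _ v
  have hSne : (l₁ + l₂) ≠ 0 := hS.ne'
  have hlne : ((l₁, l₂) : ℝ × ℝ).1 + ((l₁, l₂) : ℝ × ℝ).2 ≠ 0 := hSne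
  have part1 : fderiv ℝ H₃ (l₁, l₂) = 0 := by
    refine ContinuousLinearMap.ext fun v => ?_
    rw [hfd (l₁, l₂) hlne v]
    show a1 * l₁ * v.1 + a2 * l₂ * v.2 + K / (l₁ + l₂) * (v.1 + v.2) = 0
    field_simp
    linear_combination v.1 * key1 + v.2 * key2
  refine ⟨part1, ?_, ?_⟩
  · -- Part 2: negative definite Hessian
    intro v hv
    have hev : (fun p => fderiv ℝ H₃ p v) =ᶠ[nhds (l₁, l₂)]
        (fun p : ℝ × ℝ => a1 * p.1 * v.1 + a2 * p.2 * v.2 + K / (p.1 + p.2) * (v.1 + v.2)) := by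
      have hU : IsOpen {p : ℝ × ℝ | 0 < p.1 + p.2} :=
        isOpen_lt continuous_const (continuous_fst.add continuous_snd)
      filter_upwards [hU.mem_nhds (by simpa using hS)] with p hp
      exact hfd p (ne_of_gt hp) v
    rw [hev.fderiv_eq, (rea_auxB a1 a2 K v.1 v.2 (l₁, l₂) hlne).fderiv, rea_auxApply]
    show a1 * v.1 * v.1 + a2 * v.2 * v.2
        + (-(K * (v.1 + v.2) / (l₁ + l₂) ^ 2)) * (v.1 + v.2) < 0
    have hv' : v.1 ≠ 0 ∨ v.2 ≠ 0 := by
      by_contra hcon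
      push_neg at hcon
      exact hv (Prod.ext hcon.1 hcon.2)
    have f3 : (0:ℝ) ≤ K / (l₁ + l₂) ^ 2 * (v.1 + v.2) ^ 2 := by positivity
    have f3' : -(K * (v.1 + v.2) / (l₁ + l₂) ^ 2) * (v.1 + v.2)
        = -(K / (l₁ + l₂) ^ 2 * (v.1 + v.2) ^ 2) := by ring
    rcases hv' with hvv | hvv
    · have f1 : a1 * (v.1 * v.1) < 0 := mul_neg_of_neg_of_pos ha1 (mul_self_pos.mpr hvv)
      have f2 : a2 * (v.2 * v.2) ≤ 0 :=
        mul_nonpos_iff.mpr (Or.inr ⟨ha2.le, mul_self_nonneg v.2⟩)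
      linarith only [f1, f2, f3, f3']
    · have f1 : a2 * (v.2 * v.2) < 0 := mul_neg_of_neg_of_pos ha2 (mul_self_pos.mpr hvv)
      have f2 : a1 * (v.1 * v.1) ≤ 0 :=
        mul_nonpos_iff.mpr (Or.inr ⟨ha1.le, mul_self_nonneg v.1⟩)
      linarith only [f1, f2, f3, f3']
  · -- Part 3
    refine ⟨1, one_pos, fun p hp1 hp2 _ hpne => ?_⟩
    have hT : 0 < p.1 + p.2 := by positivity
    have hpeq : p.1 ≠ l₁ ∨ p.2 ≠ l₂ := by
      by_contra hcon
      push_neg at hcon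
      exact hpne (Prod.ext hcon.1 hcon.2)
    constructor
    · intro hzero
      have e1 : a1 * p.1 * (1:ℝ) + a2 * p.2 * 0 + K / (p.1 + p.2) * (1 + 0) = 0 := by
        rw [← hfd p hT.ne' (1, 0), hzero]; rfl
      have e2 : a1 * p.1 * (0:ℝ) + a2 * p.2 * 1 + K / (p.1 + p.2) * (0 + 1) = 0 := by
        rw [← hfd p hT.ne' (0, 1), hzero]; rfl
      have h1' : K / (p.1 + p.2) = -(a1 * p.1) := by linarith only [e1]
      have h2' : K / (p.1 + p.2) = -(a2 * p.2) := by linarith only [e2]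
      have hK1 := (div_eq_iff hT.ne').mp h1'
      have hK2 := (div_eq_iff hT.ne').mp h2'
      have e1' : a1 * (p.1 * (p.1 + p.2)) = -K := by linear_combination hK1
      have e2' : a2 * (p.2 * (p.1 + p.2)) = -K := by linear_combination hK2
      have hp1T : p.1 * (p.1 + p.2) = l₁ * (l₁ + l₂) :=
        mul_left_cancel₀ ha1.ne (by rw [e1', ← key1])
      have hp2T : p.2 * (p.1 + p.2) = l₂ * (l₁ + l₂) :=
        mul_left_cancel₀ ha2.ne (by rw [e2', ← key2])
      have hT2 : (p.1 + p.2) ^ 2 = (l₁ + l₂) ^ 2 := by linear_combination hp1T + hp2T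
      have hTS : p.1 + p.2 = l₁ + l₂ := by
        have hfac : (p.1 + p.2 - (l₁ + l₂)) * (p.1 + p.2 + (l₁ + l₂)) = 0 := by
          linear_combination hT2
        rcases mul_eq_zero.mp hfac with hca | hca
        · linarith only [hca]
        · linarith only [hca, hT, hS]
      have hq1 : p.1 = l₁ := by
        rw [hTS] at hp1T
        exact mul_right_cancel₀ hSne hp1T
      have hq2 : p.2 = l₂ := by
        rw [hTS] at hp2T
        exact mul_right_cancel₀ hSne hp2T
      exact hpne (Prod.ext hq1 hq2)
    · have hee : a1 * l₁ = a2 * l₂ := by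
        apply mul_right_cancel₀ hSne
        rw [mul_assoc, mul_assoc, key1, key2]
      have hKeq : K = -(a1 * l₁ * (l₁ + l₂)) := by linarith [key1]
      have h0 := Real.log_le_sub_one_of_pos (show 0 < (p.1 + p.2) / (l₁ + l₂) by positivity)
      rw [Real.log_div hT.ne' hSne] at h0
      have e1 : K * (Real.log (p.1 + p.2) - Real.log (l₁ + l₂)) ≤
          (-(a1 * l₁)) * ((p.1 + p.2) - (l₁ + l₂)) := by
        have h1 := mul_le_mul_of_nonneg_left h0 hK.le
        have h2 : K * ((p.1 + p.2) / (l₁ + l₂) - 1) =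
            (-(a1 * l₁)) * ((p.1 + p.2) - (l₁ + l₂)) := by
          rw [hKeq]; field_simp
        linarith
      have hee2 : a1 * l₁ * (p.2 - l₂) = a2 * l₂ * (p.2 - l₂) := by rw [hee]
      have main : H₃ p - H₃ (l₁, l₂) ≤ (a1 / 2) * (p.1 - l₁) ^ 2 + (a2 / 2) * (p.2 - l₂) ^ 2 := by
        rw [hH₃' p, hH₃' (l₁, l₂)]
        show (1 / 2) * (a1 * p.1 ^ 2 + a2 * p.2 ^ 2) + K * Real.log (p.1 + p.2)
            - ((1 / 2) * (a1 * l₁ ^ 2 + a2 * l₂ ^ 2) + K * Real.log (l₁ + l₂)) ≤ _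
        linarith only [e1, hee2]
      have hneg : (a1 / 2) * (p.1 - l₁) ^ 2 + (a2 / 2) * (p.2 - l₂) ^ 2 < 0 := by
        rcases hpeq with hq | hq
        · have f1 : a1 * (p.1 - l₁) ^ 2 < 0 :=
            mul_neg_of_neg_of_pos ha1 (sq_pos_of_ne_zero (sub_ne_zero.mpr hq))
          have f2 : a2 * (p.2 - l₂) ^ 2 ≤ 0 :=
            mul_nonpos_iff.mpr (Or.inr ⟨ha2.le, sq_nonneg _⟩)
          linarith only [f1, f2]
        · have f1 : a2 * (p.2 - l₂) ^ 2 < 0 :=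
            mul_neg_of_neg_of_pos ha2 (sq_pos_of_ne_zero (sub_ne_zero.mpr hq))
          have f2 : a1 * (p.1 - l₁) ^ 2 ≤ 0 :=
            mul_nonpos_iff.mpr (Or.inr ⟨ha1.le, sq_nonneg _⟩)
          linarith only [f1, f2]
      linarith
end

section
/- Fix p > 1, q̂ > 0 and a real number c < 0. For ε ∈ (0,1), consider the equation in s ∈ (0,1): ε^{2/(p−1)} s^{−2/(p−1)} c = q̂ · ln(1/ε)/ln(s). Then there exists ε₀ ∈ (0,1) such that for every ε ∈ (0, ε₀] this equation has a solution s_ε ∈ (0,1), and s_ε/ε → (|c|/q̂)^{(p−1)/2} as ε → 0⁺. -/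
open Filter Set Real
open scoped Classical

private lemma rpow_neg_anti' {x y a : ℝ} (hx : 0 < x) (hxy : x ≤ y) (ha : 0 < a) :
    y ^ (-a) ≤ x ^ (-a) := by
  have hy : 0 < y := lt_of_lt_of_le hx hxy
  rw [Real.rpow_neg hy.le, Real.rpow_neg hx.le]
  exact inv_anti₀ (Real.rpow_pos_of_pos hx a) (Real.rpow_le_rpow hx.le hxy ha.le)

private lemma rpow_neg_anti_strict' {x y a : ℝ} (hx : 0 < x) (hxy : x < y) (ha : 0 < a) :
    y ^ (-a) < x ^ (-a) := by
  have hy : 0 < y := lt_trans hx hxy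
  rw [Real.rpow_neg hy.le, Real.rpow_neg hx.le]
  exact inv_strictAnti₀ (Real.rpow_pos_of_pos hx a) (Real.rpow_lt_rpow hx.le hxy ha)

noncomputable def coreG (c a qhat ε t : ℝ) : ℝ :=
  (-c) * t ^ (-a) * Real.log (ε * t) - qhat * Real.log ε

noncomputable def coreT (c a qhat L ε : ℝ) : ℝ :=
  if h : ∃ t ∈ Set.Icc (L / 2) (2 * L), coreG c a qhat ε t = 0 then h.choose else L

theorem core_radius_equation (p qhat c : ℝ) (hp : 1 < p) (hq : 0 < qhat) (hc : c < 0) :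
    ∃ ε₀ : ℝ, 0 < ε₀ ∧ ε₀ < 1 ∧
      ∃ s : ℝ → ℝ,
        (∀ ε : ℝ, 0 < ε → ε ≤ ε₀ →
          s ε ∈ Set.Ioo (0 : ℝ) 1 ∧
          ε ^ (2 / (p - 1)) * (s ε) ^ (-(2 / (p - 1))) * c =
            qhat * Real.log (1 / ε) / Real.log (s ε)) ∧
        Filter.Tendsto (fun ε => s ε / ε) (nhdsWithin 0 (Set.Ioi 0))
          (nhds ((|c| / qhat) ^ ((p - 1) / 2))) := by
  have hp1 : (0:ℝ) < p - 1 := by linarith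
  set a : ℝ := 2 / (p - 1) with ha_def
  have ha : 0 < a := by rw [ha_def]; positivity
  have hnc : 0 < -c := by linarith
  have habs : |c| = -c := abs_of_neg hc
  set L : ℝ := (|c| / qhat) ^ ((p - 1) / 2) with hL_def
  have hbase : 0 < |c| / qhat := by rw [habs]; exact div_pos hnc hq
  have hL : 0 < L := Real.rpow_pos_of_pos hbase _
  have hkey : (-c) * L ^ (-a) = qhat := by
    rw [hL_def, ha_def, ← Real.rpow_mul hbase.le]
    have h1 : (p - 1) / 2 * -(2 / (p - 1)) = -1 := by field_simp
    rw [h1, Real.rpow_neg_one, habs, inv_div]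
    field_simp
    exact div_self hc.ne
  have hL2 : (0:ℝ) < L / 2 := by linarith
  have hL2le : L / 2 ≤ 2 * L := by linarith
  have h2L : (0:ℝ) < 2 * L := by linarith
  have hlogT : Tendsto Real.log (nhdsWithin 0 (Set.Ioi 0)) atBot :=
    Real.tendsto_log_nhdsGT_zero
  have hA : qhat < (-c) * (L / 2) ^ (-a) := by
    have h := rpow_neg_anti_strict' hL2 (by linarith : L / 2 < L) ha
    nlinarith
  have hB : (-c) * (2 * L) ^ (-a) < qhat := by
    have h := rpow_neg_anti_strict' hL (by linarith : L < 2 * L) ha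
    nlinarith
  -- eventual sign conditions at the endpoints
  have hev1 : ∀ᶠ ε in nhdsWithin 0 (Set.Ioi 0), coreG c a qhat ε (L / 2) ≤ 0 := by
    have ht : Tendsto (fun ε => ((-c) * (L / 2) ^ (-a) - qhat) * Real.log ε
        + (-c) * (L / 2) ^ (-a) * Real.log (L / 2)) (nhdsWithin 0 (Set.Ioi 0)) atBot := by
      apply Filter.tendsto_atBot_add_const_right
      exact hlogT.const_mul_atBot (by linarith)
    filter_upwards [self_mem_nhdsWithin, ht.eventually (Filter.eventually_le_atBot 0)]
      with ε hε hle
    have hε0 : 0 < ε := hε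
    have : coreG c a qhat ε (L / 2) = ((-c) * (L / 2) ^ (-a) - qhat) * Real.log ε
        + (-c) * (L / 2) ^ (-a) * Real.log (L / 2) := by
      unfold coreG
      rw [Real.log_mul hε0.ne' hL2.ne']
      ring
    rw [this]; exact hle
  have hev2 : ∀ᶠ ε in nhdsWithin 0 (Set.Ioi 0), 0 ≤ coreG c a qhat ε (2 * L) := by
    have ht : Tendsto (fun ε => ((-c) * (2 * L) ^ (-a) - qhat) * Real.log ε
        + (-c) * (2 * L) ^ (-a) * Real.log (2 * L)) (nhdsWithin 0 (Set.Ioi 0)) atTop := by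
      apply Filter.tendsto_atTop_add_const_right
      exact hlogT.const_mul_atBot_of_neg (by linarith)
    filter_upwards [self_mem_nhdsWithin, ht.eventually (Filter.eventually_ge_atTop 0)]
      with ε hε hle
    have hε0 : 0 < ε := hε
    have : coreG c a qhat ε (2 * L) = ((-c) * (2 * L) ^ (-a) - qhat) * Real.log ε
        + (-c) * (2 * L) ^ (-a) * Real.log (2 * L) := by
      unfold coreG
      rw [Real.log_mul hε0.ne' h2L.ne']
      ring
    rw [this]; exact hle
  have hev3 : ∀ᶠ ε in nhdsWithin 0 (Set.Ioi 0), ε < 1 ∧ 2 * L * ε < 1 := by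
    have hmem : Set.Ioo (0:ℝ) (min 1 (1 / (2 * L))) ∈ nhdsWithin 0 (Set.Ioi 0) := by
      apply Ioo_mem_nhdsGT_of_mem
      constructor
      · exact le_refl 0
      · have : (0:ℝ) < 1 / (2 * L) := by positivity
        exact lt_min one_pos this
    filter_upwards [hmem] with ε hε
    constructor
    · exact lt_of_lt_of_le hε.2 (min_le_left _ _)
    · have h1 : ε < 1 / (2 * L) := lt_of_lt_of_le hε.2 (min_le_right _ _)
      calc 2 * L * ε < 2 * L * (1 / (2 * L)) := by
            exact mul_lt_mul_of_pos_left h1 h2L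
        _ = 1 := by field_simp
  have hP : ∀ᶠ ε in nhdsWithin 0 (Set.Ioi 0),
      0 < ε ∧ ε < 1 ∧ 2 * L * ε < 1 ∧ coreG c a qhat ε (L / 2) ≤ 0
        ∧ 0 ≤ coreG c a qhat ε (2 * L) := by
    filter_upwards [self_mem_nhdsWithin, hev1, hev2, hev3] with ε h0 h1 h2 h3
    exact ⟨h0, h3.1, h3.2, h1, h2⟩
  rw [Filter.eventually_iff] at hP
  obtain ⟨u, hu, hsub⟩ := mem_nhdsGT_iff_exists_Ioc_subset.mp hP
  have hu0 : 0 < u := hu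
  -- the root selector works whenever the sign conditions hold
  have hroot : ∀ ε : ℝ, 0 < ε → coreG c a qhat ε (L / 2) ≤ 0 → 0 ≤ coreG c a qhat ε (2 * L) →
      coreT c a qhat L ε ∈ Set.Icc (L / 2) (2 * L) ∧ coreG c a qhat ε (coreT c a qhat L ε) = 0 := by
    intro ε hε hGa hGb
    have hcont : ContinuousOn (coreG c a qhat ε) (Set.Icc (L / 2) (2 * L)) := by
      intro t ht
      have ht0 : 0 < t := lt_of_lt_of_le hL2 ht.1
      apply ContinuousAt.continuousWithinAt
      have h1 : ContinuousAt (fun t : ℝ => t ^ (-a)) t :=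
        Real.continuousAt_rpow_const t (-a) (Or.inl ht0.ne')
      have h2 : ContinuousAt (fun t : ℝ => Real.log (ε * t)) t := by
        have hlc : ContinuousAt Real.log (ε * t) := Real.continuousAt_log (by positivity)
        exact hlc.comp (continuousAt_const.mul continuousAt_id)
      exact ((continuousAt_const.mul h1).mul h2).sub continuousAt_const
    have h0mem : (0:ℝ) ∈ Set.Icc (coreG c a qhat ε (L / 2)) (coreG c a qhat ε (2 * L)) :=
      ⟨hGa, hGb⟩
    obtain ⟨t, htmem, htval⟩ := intermediate_value_Icc hL2le hcont h0mem
    have hex : ∃ t ∈ Set.Icc (L / 2) (2 * L), coreG c a qhat ε t = 0 := ⟨t, htmem, htval⟩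
    have heq : coreT c a qhat L ε = hex.choose := by unfold coreT; rw [dif_pos hex]
    rw [heq]
    exact hex.choose_spec
  refine ⟨min u (1/2), lt_min hu0 (by norm_num), lt_of_le_of_lt (min_le_right _ _) (by norm_num),
    fun ε => ε * coreT c a qhat L ε, ?_, ?_⟩
  · intro ε hε0 hεle
    obtain ⟨_, hε1, hεL, hGa, hGb⟩ :=
      hsub ⟨hε0, le_trans hεle (le_trans (min_le_left _ _) (le_refl u))⟩
    obtain ⟨hmem', hGt⟩ := hroot ε hε0 hGa hGb
    beta_reduce
    generalize hT : coreT c a qhat L ε = t at hmem' hGt ⊢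
    obtain ⟨ht1, ht2⟩ := hmem'
    have ht0 : 0 < t := lt_of_lt_of_le hL2 ht1
    have hs0 : 0 < ε * t := by positivity
    have hs1 : ε * t < 1 := by nlinarith
    refine ⟨⟨hs0, hs1⟩, ?_⟩
    have hlogneg : Real.log (ε * t) < 0 := Real.log_neg hs0 hs1
    have hmul : (ε * t) ^ (-a) = ε ^ (-a) * t ^ (-a) := Real.mul_rpow hε0.le ht0.le
    have hcan : ε ^ a * ε ^ (-a) = 1 := by
      rw [← Real.rpow_add hε0]; simp
    rw [hmul, one_div, Real.log_inv, eq_div_iff (ne_of_lt hlogneg)]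
    have e1 : ε ^ a * (ε ^ (-a) * t ^ (-a)) * c * Real.log (ε * t)
        = (ε ^ a * ε ^ (-a)) * (t ^ (-a) * c * Real.log (ε * t)) := by ring
    rw [e1, hcan, one_mul]
    have hGt' : (-c) * t ^ (-a) * Real.log (ε * t) - qhat * Real.log ε = 0 := hGt
    linear_combination -hGt'
  · rw [Metric.tendsto_nhds]
    intro δ hδ
    set δ' := min δ (L / 2) with hδ'_def
    have hδ'0 : 0 < δ' := lt_min hδ hL2
    have hδ'L : δ' ≤ L / 2 := min_le_right _ _
    have hLd0 : 0 < L - δ' := by linarith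
    have hη1 : 0 < (-c) * (L - δ') ^ (-a) - qhat := by
      have h := rpow_neg_anti_strict' hLd0 (by linarith : L - δ' < L) ha
      nlinarith
    have hη2 : 0 < qhat - (-c) * (L + δ') ^ (-a) := by
      have h := rpow_neg_anti_strict' hL (by linarith : L < L + δ') ha
      nlinarith
    obtain ⟨η, hη_def⟩ : ∃ η : ℝ,
        η = min ((-c) * (L - δ') ^ (-a) - qhat) (qhat - (-c) * (L + δ') ^ (-a)) := ⟨_, rfl⟩
    have hηle1 : η ≤ (-c) * (L - δ') ^ (-a) - qhat := hη_def ▸ min_le_left _ _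
    have hηle2 : η ≤ qhat - (-c) * (L + δ') ^ (-a) := hη_def ▸ min_le_right _ _
    have hη0 : 0 < η := hη_def ▸ lt_min hη1 hη2
    obtain ⟨A, hA_def⟩ : ∃ A : ℝ, A = (-c) * (L / 2) ^ (-a) := ⟨_, rfl⟩
    obtain ⟨C, hC_def⟩ : ∃ C : ℝ, C = |Real.log (L / 2)| + |Real.log (2 * L)| := ⟨_, rfl⟩
    have hC0 : 0 ≤ C := by rw [hC_def]; positivity
    have hA0 : 0 < A := hA_def ▸ mul_pos hnc (Real.rpow_pos_of_pos hL2 _)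
    have hMev : ∀ᶠ ε in nhdsWithin 0 (Set.Ioi 0), A * C < η * (-Real.log ε) := by
      have htend : Tendsto (fun ε => η * (-Real.log ε)) (nhdsWithin 0 (Set.Ioi 0)) atTop := by
        apply Filter.Tendsto.const_mul_atTop hη0
        exact Filter.tendsto_neg_atBot_atTop.comp hlogT
      exact htend.eventually_gt_atTop (A * C)
    filter_upwards [hMev, Ioc_mem_nhdsGT (lt_min hu0 (by norm_num : (0:ℝ) < 1/2))]
      with ε hM hIoc
    obtain ⟨hε0, hε1, hεL, hGa, hGb⟩ := hsub ⟨hIoc.1, le_trans hIoc.2 (min_le_left _ _)⟩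
    obtain ⟨hmem', hGt⟩ := hroot ε hε0 hGa hGb
    generalize hT : coreT c a qhat L ε = t at hmem' hGt ⊢
    obtain ⟨ht1, ht2⟩ := hmem'
    have ht0 : 0 < t := lt_of_lt_of_le hL2 ht1
    have hsimp : ε * t / ε = t := by field_simp
    rw [Real.dist_eq, hsimp]
    have hX0 : 0 < (-c) * t ^ (-a) := mul_pos hnc (Real.rpow_pos_of_pos ht0 _)
    have hXle : (-c) * t ^ (-a) ≤ A := by
      have h := rpow_neg_anti' hL2 ht1 ha
      rw [hA_def]
      exact mul_le_mul_of_nonneg_left h hnc.le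
    have hlo : Real.log (L / 2) ≤ Real.log t := Real.log_le_log hL2 ht1
    have hhi : Real.log t ≤ Real.log (2 * L) := Real.log_le_log ht0 ht2
    have hlt : |Real.log t| ≤ C := by
      rw [abs_le]
      constructor
      · linarith [neg_abs_le (Real.log (L / 2)), abs_nonneg (Real.log (2 * L)), hC_def.ge]
      · linarith [le_abs_self (Real.log (2 * L)), abs_nonneg (Real.log (L / 2)), hC_def.le]
    have hεlog : Real.log ε < 0 := Real.log_neg hε0 hε1
    have hsplit : ((-c) * t ^ (-a) - qhat) * Real.log ε = -(((-c) * t ^ (-a)) * Real.log t) := by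
      have hGt' : (-c) * t ^ (-a) * (Real.log ε + Real.log t) - qhat * Real.log ε = 0 := by
        have h := hGt
        unfold coreG at h
        rwa [Real.log_mul hε0.ne' ht0.ne'] at h
      linear_combination hGt'
    have habs2 : |(-c) * t ^ (-a) - qhat| * (-Real.log ε) < η * (-Real.log ε) := by
      calc |(-c) * t ^ (-a) - qhat| * (-Real.log ε) = |(((-c) * t ^ (-a)) - qhat) * Real.log ε| := by
            rw [abs_mul, abs_of_neg hεlog]
        _ = |((-c) * t ^ (-a)) * Real.log t| := by rw [hsplit, abs_neg]
        _ = ((-c) * t ^ (-a)) * |Real.log t| := by rw [abs_mul, abs_of_pos hX0]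
        _ ≤ A * C := mul_le_mul hXle hlt (abs_nonneg _) hA0.le
        _ < η * (-Real.log ε) := hM
    have hXη : |(-c) * t ^ (-a) - qhat| < η :=
      lt_of_mul_lt_mul_right habs2 (by linarith : (0:ℝ) ≤ -Real.log ε)
    obtain ⟨hX1, hX2⟩ := abs_lt.mp hXη
    have ht_lo : L - δ' < t := by
      by_contra h
      push_neg at h
      have hanti := rpow_neg_anti' ht0 h ha
      have hXge : (-c) * (L - δ') ^ (-a) ≤ (-c) * t ^ (-a) :=
        mul_le_mul_of_nonneg_left hanti hnc.le
      linarith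
    have ht_hi : t < L + δ' := by
      by_contra h
      push_neg at h
      have hanti := rpow_neg_anti' (by linarith : (0:ℝ) < L + δ') h ha
      have hXle' : (-c) * t ^ (-a) ≤ (-c) * (L + δ') ^ (-a) :=
        mul_le_mul_of_nonneg_left hanti hnc.le
      linarith
    have : |t - L| < δ' := abs_lt.mpr ⟨by linarith, by linarith⟩
    exact lt_of_lt_of_le this (min_le_left _ _)
end
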